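/- Uniqueness of the completion: for any triple subgraph M ↪ T, the completion C(M,T) exists and is unique, i.e., there is exactly one smallest triple graph G with M ↪ G ↪ T satisfying the closure conditions (no node of G|_s is related to a node of T|_t outside G|_t, no node of G|_t is related to a node of T|_s outside G|_s, all unrelated nodes of T are in G, and G contains all edges of T between its nodes). -/

import Mathlib

structure TGGraph where
  V : Type
  E : Type
  s : E → V
  t : E → V

structure TripleGraph where
  Gs : TGGraph
  Gc : TGGraph
  Gt : TGGraph
  cs : Gc.V → Gs.V
  ct : Gc.V → Gt.V

/-- `x rel y`: source node `x` is related to target node `y` via a correspondence node. -/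
def TripleGraph.rel (T : TripleGraph) (x : T.Gs.V) (y : T.Gt.V) : Prop :=
  ∃ m : T.Gc.V, T.cs m = x ∧ T.ct m = y

/-- A triple subgraph of `T`, given by subsets of nodes and edges of each component,
closed under source/target maps and correspondence functions. -/
structure TripleSub (T : TripleGraph) where
  Vs : Set T.Gs.V
  Es : Set T.Gs.E
  Vc : Set T.Gc.V
  Ec : Set T.Gc.E
  Vt : Set T.Gt.V
  Et : Set T.Gt.E
  hss : ∀ e ∈ Es, T.Gs.s e ∈ Vs
  hst : ∀ e ∈ Es, T.Gs.t e ∈ Vs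
  hcs' : ∀ e ∈ Ec, T.Gc.s e ∈ Vc
  hct' : ∀ e ∈ Ec, T.Gc.t e ∈ Vc
  hts : ∀ e ∈ Et, T.Gt.s e ∈ Vt
  htt : ∀ e ∈ Et, T.Gt.t e ∈ Vt
  hcsV : ∀ v ∈ Vc, T.cs v ∈ Vs
  hctV : ∀ v ∈ Vc, T.ct v ∈ Vt

/-- Componentwise inclusion of triple subgraphs (`M ↪ G`). -/
def TripleSub.le {T : TripleGraph} (M G : TripleSub T) : Prop :=
  M.Vs ⊆ G.Vs ∧ M.Es ⊆ G.Es ∧ M.Vc ⊆ G.Vc ∧ M.Ec ⊆ G.Ec ∧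
  M.Vt ⊆ G.Vt ∧ M.Et ⊆ G.Et

/-- The full subgraph of `T` (i.e. `T` itself). -/
def TripleSub.top (T : TripleGraph) : TripleSub T :=
  ⟨Set.univ, Set.univ, Set.univ, Set.univ, Set.univ, Set.univ,
   fun _ _ => trivial, fun _ _ => trivial, fun _ _ => trivial,
   fun _ _ => trivial, fun _ _ => trivial, fun _ _ => trivial,
   fun _ _ => trivial, fun _ _ => trivial⟩

/-- The closure conditions of the completion: no node of `G|_s` is related to a
node of `T|_t` outside `G|_t` and vice versa; all unrelated nodes of `T` are in
`G`; and `G` contains all edges of `T` between its nodes. -/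
def TripleSub.Closed {T : TripleGraph} (G : TripleSub T) : Prop :=
  (∀ n ∈ G.Vs, ∀ m : T.Gt.V, T.rel n m → m ∈ G.Vt) ∧
  (∀ x ∈ G.Vt, ∀ y : T.Gs.V, T.rel y x → y ∈ G.Vs) ∧
  (∀ z : T.Gs.V, (∀ y, ¬ T.rel z y) → z ∈ G.Vs) ∧
  (∀ z : T.Gt.V, (∀ y, ¬ T.rel y z) → z ∈ G.Vt) ∧
  (∀ e : T.Gs.E, T.Gs.s e ∈ G.Vs → T.Gs.t e ∈ G.Vs → e ∈ G.Es) ∧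
  (∀ e : T.Gt.E, T.Gt.s e ∈ G.Vt → T.Gt.t e ∈ G.Vt → e ∈ G.Et)

/-- `G` is the completion `C(M,T)`: the smallest closed triple subgraph containing `M`. -/
def IsCompletion {T : TripleGraph} (M G : TripleSub T) : Prop :=
  M.le G ∧ G.Closed ∧ ∀ G' : TripleSub T, M.le G' → G'.Closed → G.le G'

/-! Each closure condition only asks for membership of some node or edge given membership of
others, so closed subgraphs containing `M` are stable under arbitrary intersection; the
intersection of all of them is the least one, and a least element is unique. -/

namespace TripleSub

variable {T : TripleGraph}

theorem le_antisymm {A B : TripleSub T} (hAB : A.le B) (hBA : B.le A) : A = B := by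
  obtain ⟨hVs, hEs, hVc, hEc, hVt, hEt⟩ := hAB
  obtain ⟨hVs', hEs', hVc', hEc', hVt', hEt'⟩ := hBA
  cases A; cases B
  congr
  exacts [hVs.antisymm hVs', hEs.antisymm hEs', hVc.antisymm hVc', hEc.antisymm hEc',
    hVt.antisymm hVt', hEt.antisymm hEt']

def sInf (S : Set (TripleSub T)) : TripleSub T where
  Vs := ⋂ G ∈ S, G.Vs
  Es := ⋂ G ∈ S, G.Es
  Vc := ⋂ G ∈ S, G.Vc
  Ec := ⋂ G ∈ S, G.Ec
  Vt := ⋂ G ∈ S, G.Vt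
  Et := ⋂ G ∈ S, G.Et
  hss e he := Set.mem_iInter₂.2 fun G hG => G.hss e (Set.mem_iInter₂.1 he G hG)
  hst e he := Set.mem_iInter₂.2 fun G hG => G.hst e (Set.mem_iInter₂.1 he G hG)
  hcs' e he := Set.mem_iInter₂.2 fun G hG => G.hcs' e (Set.mem_iInter₂.1 he G hG)
  hct' e he := Set.mem_iInter₂.2 fun G hG => G.hct' e (Set.mem_iInter₂.1 he G hG)
  hts e he := Set.mem_iInter₂.2 fun G hG => G.hts e (Set.mem_iInter₂.1 he G hG)
  htt e he := Set.mem_iInter₂.2 fun G hG => G.htt e (Set.mem_iInter₂.1 he G hG)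
  hcsV v hv := Set.mem_iInter₂.2 fun G hG => G.hcsV v (Set.mem_iInter₂.1 hv G hG)
  hctV v hv := Set.mem_iInter₂.2 fun G hG => G.hctV v (Set.mem_iInter₂.1 hv G hG)

theorem sInf_le {S : Set (TripleSub T)} {G : TripleSub T} (hG : G ∈ S) : (sInf S).le G :=
  ⟨Set.biInter_subset_of_mem hG, Set.biInter_subset_of_mem hG, Set.biInter_subset_of_mem hG,
    Set.biInter_subset_of_mem hG, Set.biInter_subset_of_mem hG, Set.biInter_subset_of_mem hG⟩

theorem le_sInf {S : Set (TripleSub T)} {H : TripleSub T} (hH : ∀ G ∈ S, H.le G) :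
    H.le (sInf S) :=
  ⟨Set.subset_iInter₂ fun G hG => (hH G hG).1, Set.subset_iInter₂ fun G hG => (hH G hG).2.1,
    Set.subset_iInter₂ fun G hG => (hH G hG).2.2.1,
    Set.subset_iInter₂ fun G hG => (hH G hG).2.2.2.1,
    Set.subset_iInter₂ fun G hG => (hH G hG).2.2.2.2.1,
    Set.subset_iInter₂ fun G hG => (hH G hG).2.2.2.2.2⟩

theorem closed_sInf {S : Set (TripleSub T)} (hS : ∀ G ∈ S, G.Closed) : (sInf S).Closed := by
  simp only [Closed, sInf, Set.mem_iInter₂]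
  refine ⟨?_, ?_, ?_, ?_, ?_, ?_⟩
  · exact fun x hx y hxy G hG => (hS G hG).1 x (hx G hG) y hxy
  · exact fun y hy x hxy G hG => (hS G hG).2.1 y (hy G hG) x hxy
  · exact fun x hx G hG => (hS G hG).2.2.1 x hx
  · exact fun y hy G hG => (hS G hG).2.2.2.1 y hy
  · exact fun e hs ht G hG => (hS G hG).2.2.2.2.1 e (hs G hG) (ht G hG)
  · exact fun e hs ht G hG => (hS G hG).2.2.2.2.2 e (hs G hG) (ht G hG)

end TripleSub

theorem IsCompletion.unique {T : TripleGraph} {M G H : TripleSub T} (hG : IsCompletion M G)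
    (hH : IsCompletion M H) : G = H :=
  TripleSub.le_antisymm (hG.2.2 H hH.1 hH.2.1) (hH.2.2 G hG.1 hG.2.1)

theorem isCompletion_sInf {T : TripleGraph} (M : TripleSub T) :
    IsCompletion M (TripleSub.sInf {G | M.le G ∧ G.Closed}) :=
  ⟨TripleSub.le_sInf fun _ hG => hG.1, TripleSub.closed_sInf fun _ hG => hG.2,
    fun _ hM hClosed => TripleSub.sInf_le ⟨hM, hClosed⟩⟩

/-- for any triple subgraph `M ↪ T`, the completion `C(M,T)` exists
and is unique: there is exactly one smallest closed triple subgraph `G` with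
`M ↪ G ↪ T` satisfying the closure conditions. -/
theorem stmt8 {T : TripleGraph} (M : TripleSub T) :
    ∃! G : TripleSub T, IsCompletion M G :=
  ⟨_, isCompletion_sInf M, fun _ hG => hG.unique (isCompletion_sInf M)⟩
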